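/- Let I be a good ideal in K[x_1,…,x_n] and let Q be a nonnegative integer. Then there exists a number L(Q) such that for every l ≥ L(Q) the following holds: for every minimal generator m of I^l there exist an index i ∈ {1,…,n} and a minimal generator m' of I^{l−Q} such that m = m'·μ_i^Q. -/

import Mathlib

open MvPolynomial

namespace GasanovaRR

/-- The monomial `x^α` in `K[x_1,…,x_n]`. -/
noncomputable def mono (K : Type*) [Field K] {n : ℕ} (α : Fin n → ℕ) :
    MvPolynomial (Fin n) K :=
  MvPolynomial.monomial (Finsupp.equivFunOnFinite.symm α) 1

/-- `I` is a monomial ideal: it is generated by a set of monomials. -/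
def IsMonomialIdeal {K : Type*} [Field K] {n : ℕ}
    (I : Ideal (MvPolynomial (Fin n) K)) : Prop :=
  ∃ A : Set (Fin n → ℕ), I = Ideal.span (mono K '' A)

/-- `x^α` is a minimal monomial generator of `I`, i.e. `x^α ∈ G(I)`:
`x^α ∈ I` and no monomial in `I` strictly divides it. -/
def IsMinGen {K : Type*} [Field K] {n : ℕ}
    (I : Ideal (MvPolynomial (Fin n) K)) (α : Fin n → ℕ) : Prop :=
  mono K α ∈ I ∧ ∀ β : Fin n → ℕ, mono K β ∈ I → β ≤ α → β = α

/-- The point `α` lies in the box `B_{a_1,…,a_n}` (for box sizes `d_1,…,d_n`). -/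
def InBox {n : ℕ} (d a α : Fin n → ℕ) : Prop :=
  ∀ i, a i * d i ≤ α i ∧ α i ≤ (a i + 1) * d i

/-- `I` is a good ideal (w.r.t. box sizes `d`): for every `l ≥ 1`, every minimal
generator of `I^l` lies in a box whose coordinate sum is `l - 1`. -/
def IsGood {K : Type*} [Field K] {n : ℕ}
    (I : Ideal (MvPolynomial (Fin n) K)) (d : Fin n → ℕ) : Prop :=
  ∀ l : ℕ, 1 ≤ l → ∀ α : Fin n → ℕ, IsMinGen (I ^ l) α →
    ∃ a : Fin n → ℕ, InBox d a α ∧ ∑ i, a i = l - 1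

/-- `I` is an `𝔪`-primary monomial ideal whose minimal generating set contains
`μ_i = x_i^{d_i}` with `d_i > 0` for each `i`. -/
def MPrimaryWithCorners {K : Type*} [Field K] {n : ℕ}
    (I : Ideal (MvPolynomial (Fin n) K)) (d : Fin n → ℕ) : Prop :=
  IsMonomialIdeal I ∧ I ≠ ⊤ ∧ (∀ i, 0 < d i) ∧ ∀ i, IsMinGen I (Pi.single i (d i))

/-- The ideal `I_{a_1,…,a_n}` associated to the box `B_{a_1,…,a_n}`, generated by
`m / (μ_1^{a_1}⋯μ_n^{a_n})` for `m ∈ B_{a_1,…,a_n} ∩ G(I^l)`, `l = a_1+⋯+a_n+1`. -/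
noncomputable def boxIdeal {K : Type*} [Field K] {n : ℕ}
    (I : Ideal (MvPolynomial (Fin n) K)) (d a : Fin n → ℕ) :
    Ideal (MvPolynomial (Fin n) K) :=
  Ideal.span ((fun α => mono K (α - fun i => a i * d i)) ''
    {α | InBox d a α ∧ IsMinGen (I ^ (∑ i, a i + 1)) α})

/-- The Ratliff–Rush closure `Ĩ = ⋃_{k ≥ 0} (I^{k+1} : I^k)`. -/
noncomputable def ratliffRush {K : Type*} [Field K] {n : ℕ}
    (I : Ideal (MvPolynomial (Fin n) K)) : Ideal (MvPolynomial (Fin n) K) :=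
  ⨆ k : ℕ, (I ^ (k + 1)).colon ((I ^ k : Ideal (MvPolynomial (Fin n) K)) : Set (MvPolynomial (Fin n) K))

/-- The cone in `ℕ^n` with set `S` of fixed coordinates and vertex `v`. -/
def Cone {n : ℕ} (S : Set (Fin n)) (v : Fin n → ℕ) : Set (Fin n → ℕ) :=
  {b | (∀ i ∈ S, b i = v i) ∧ ∀ i ∉ S, v i ≤ b i}

/-- `I` is a very good ideal: it is good and `I_{a_1,…,a_n} = I` for all boxes. -/
def IsVeryGood {K : Type*} [Field K] {n : ℕ}
    (I : Ideal (MvPolynomial (Fin n) K)) (d : Fin n → ℕ) : Prop :=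
  IsGood I d ∧ ∀ a : Fin n → ℕ, boxIdeal I d a = I

/-!
Write a minimal generator `α` of `I^l` as `α = r + a * d`, where `a` indexes its box and the
offset `r` satisfies `r ≤ d`. For a fixed offset `r`, the box indices `a` with
`x^(r + a * d) ∈ I^(|a| + 1)` form an upper set of `ℕ^n` (multiply by the `μ_k`), so by
Dickson's lemma its finitely many minimal elements are bounded by some `N`; as there are
finitely many offsets, `N` can be chosen uniformly. For large `l` some `a_i` exceeds `N + Q`,
so lowering `a_i` by `Q` keeps the point in the upper set: `α - Q • μ_i` lies in `I^(l - Q)`,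
and it is a minimal generator there because `α` is one of `I^l`.
-/

open Filter

theorem IsUpperSet.eventually_inf_const_mem {ι : Type*} [Finite ι] {U : Set (ι → ℕ)}
    (hU : IsUpperSet U) : ∀ᶠ N in atTop, ∀ a ∈ U, a ⊓ (fun _ => N) ∈ U := by
  have hfin : {m | Minimal (· ∈ U) m}.Finite :=
    WellQuasiOrderedLE.finite_of_isAntichain (setOfPred_minimal_antichain _)
  filter_upwards [hfin.eventually_all.2 fun m _ => eventually_all.2 fun j =>
    eventually_ge_atTop (m j)] with N hN a ha
  obtain ⟨m, hma, hm⟩ := exists_minimal_le_of_wellFoundedLT (· ∈ U) a ha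
  exact hU (le_inf hma (hN m hm)) hm.prop

theorem exists_eq_add_nsmul_single_and_inf_const_le {ι : Type*} [DecidableEq ι] {a : ι → ℕ}
    {i : ι} {N Q : ℕ} (h : N + Q ≤ a i) :
    ∃ a', a = a' + Q • Pi.single i 1 ∧ a ⊓ (fun _ => N) ≤ a' := by
  refine ⟨a - Q • Pi.single i 1, funext fun k => ?_, fun k => ?_⟩ <;>
    rcases eq_or_ne k i with rfl | hk <;> simp [*] <;> omega

section Monomials

variable {K : Type*} [Field K] {n : ℕ}

theorem mono_eq_monomial_linearEquivFunOnFinite (u : Fin n → ℕ) :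
    mono K u = monomial ((Finsupp.linearEquivFunOnFinite ℕ ℕ (Fin n)).symm u) 1 :=
  rfl

theorem mono_add (u v : Fin n → ℕ) : mono K (u + v) = mono K u * mono K v := by
  simp only [mono_eq_monomial_linearEquivFunOnFinite, map_add, monomial_mul, one_mul]

theorem mono_nsmul (m : ℕ) (u : Fin n → ℕ) : mono K (m • u) = mono K u ^ m := by
  simp only [mono_eq_monomial_linearEquivFunOnFinite, map_nsmul, monomial_pow, one_pow]

theorem mono_sum {ι : Type*} (s : Finset ι) (f : ι → Fin n → ℕ) :
    mono K (∑ i ∈ s, f i) = ∏ i ∈ s, mono K (f i) := by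
  simp only [mono_eq_monomial_linearEquivFunOnFinite, map_sum, monomial_sum_one]

theorem mono_mul_mem_pow_sum {I : Ideal (MvPolynomial (Fin n) K)} {d : Fin n → ℕ}
    (hμ : ∀ k, mono K (Pi.single k (d k)) ∈ I) (c : Fin n → ℕ) :
    mono K (c * d) ∈ I ^ ∑ k, c k := by
  have hcd : c * d = ∑ k, c k • Pi.single k (d k) := by
    ext j; simp [Finset.sum_apply, Pi.single_apply]
  rw [hcd, mono_sum, ← Finset.prod_pow_eq_pow_sum]
  refine Ideal.prod_mem_prod fun k _ => ?_
  rw [mono_nsmul]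
  exact Ideal.pow_mem_pow (hμ k) _

theorem isUpperSet_setOf_mono_mem_pow {I : Ideal (MvPolynomial (Fin n) K)} {d : Fin n → ℕ}
    (hμ : ∀ k, mono K (Pi.single k (d k)) ∈ I) (r : Fin n → ℕ) :
    IsUpperSet {a | mono K (r + a * d) ∈ I ^ (∑ k, a k + 1)} := by
  intro a a' hle ha
  obtain ⟨c, rfl⟩ := exists_add_of_le hle
  have hmem := Ideal.mul_mem_mul (Set.mem_ofPred.1 ha) (mono_mul_mem_pow_sum hμ c)
  rwa [← mono_add, ← pow_add, add_right_comm, ← Finset.sum_add_distrib, add_assoc, ← add_mul]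
    at hmem

theorem IsMinGen.of_add {J J' : Ideal (MvPolynomial (Fin n) K)} {β δ : Fin n → ℕ}
    (h : IsMinGen (J * J') (β + δ)) (hβ : mono K β ∈ J) (hδ : mono K δ ∈ J') :
    IsMinGen J β :=
  ⟨hβ, fun β' hβ' hle => add_right_cancel <|
    h.2 _ (mono_add (K := K) β' δ ▸ Ideal.mul_mem_mul hβ' hδ) (add_le_add_left hle δ)⟩

end Monomials

theorem InBox.exists_le_eq_add {n : ℕ} {d a α : Fin n → ℕ} (h : InBox d a α) :
    ∃ r ≤ d, α = r + a * d := by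
  refine ⟨α - a * d, fun k => ?_, funext fun k => ?_⟩ <;>
    have := h k <;> simp only [Pi.sub_apply, Pi.add_apply, Pi.mul_apply] <;> grind

/-- Lemma 6.1: for a good ideal `I` and any `Q ≥ 0` there exists `L(Q)` such that
for all `l ≥ L(Q)` and every minimal generator `m` of `I^l` there is an index `i`
and a minimal generator `m'` of `I^{l-Q}` with `m = m' · μ_i^Q`. -/
theorem factor_out_corner_power {K : Type*} [Field K] {n : ℕ}
    (I : Ideal (MvPolynomial (Fin n) K)) (d : Fin n → ℕ)
    (hI : MPrimaryWithCorners I d) (hgood : IsGood I d) (Q : ℕ) :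
    ∃ L : ℕ, ∀ l : ℕ, L ≤ l → ∀ α : Fin n → ℕ, IsMinGen (I ^ l) α →
      ∃ i : Fin n, ∃ β : Fin n → ℕ, IsMinGen (I ^ (l - Q)) β ∧
        α = β + Q • Pi.single i (d i) := by
  have hμ : ∀ k, mono K (Pi.single k (d k)) ∈ I := fun k => (hI.2.2.2 k).1
  obtain ⟨N, hN⟩ := ((Set.finite_Iic d).eventually_all.2 fun r _ =>
    IsUpperSet.eventually_inf_const_mem (isUpperSet_setOf_mono_mem_pow hμ r)).exists
  refine ⟨n * (N + Q) + 2, fun l hl α hα => ?_⟩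
  obtain ⟨a, hbox, hsum⟩ := hgood l (by omega) α hα
  obtain ⟨r, hrd, hαr⟩ := hbox.exists_le_eq_add
  obtain ⟨i, -, hi⟩ : ∃ i ∈ Finset.univ, N + Q < a i :=
    Finset.exists_lt_of_sum_lt (by simp; omega)
  obtain ⟨a', rfl, ha'⟩ := exists_eq_add_nsmul_single_and_inf_const_le hi.le
  have hl' : l = ∑ k, a' k + 1 + Q := by
    simp [Finset.sum_add_distrib, Pi.single_apply] at hsum; omega
  have hα' : α = r + a' * d + Q • Pi.single i (d i) := by
    rw [hαr, add_mul, add_assoc]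
    congr 2; ext k; rcases eq_or_ne k i with rfl | hk <;> simp [*]
  have ha'U : mono K (r + a' * d) ∈ I ^ (∑ k, a' k + 1) :=
    isUpperSet_setOf_mono_mem_pow hμ r ha' <| hN r hrd _ <| by
      rw [Set.mem_ofPred, ← hαr, hsum, Nat.sub_add_cancel (by omega)]
      exact hα.1
  have hQ : mono K (Q • Pi.single i (d i)) ∈ I ^ Q :=
    (mono_nsmul (K := K) Q _).symm ▸ Ideal.pow_mem_pow (hμ i) Q
  refine ⟨i, r + a' * d, ?_, hα'⟩
  rw [show l - Q = ∑ k, a' k + 1 by omega]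
  refine IsMinGen.of_add ?_ ha'U hQ
  rwa [← pow_add, ← hl', ← hα']

end GasanovaRR
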